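/- Let M be the monoid presented by ⟨ a, a⁻¹, b, b⁻¹, h | aa⁻¹=a⁻¹a=bb⁻¹=b⁻¹b=1, xh=hx, hxy=hyx (x,y ∈ {a,a⁻¹,b,b⁻¹}), h²a=h²a⁻¹=h²b=h²b⁻¹=h³=h² ⟩. Then the group of units of M is isomorphic to the free group of rank 2. -/

import Mathlib

/-- The five generating letters `a, a⁻¹, b, b⁻¹, h`. -/
inductive L : Type
  | a | a' | b | b' | h
deriving DecidableEq

/-- Words over the five letters. -/
abbrev W : Type := FreeMonoid L

/-- The one-letter word. -/
def gen (x : L) : W := FreeMonoid.of x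

open L in
/-- The defining relations of the monoid `M`. -/
inductive rel : W → W → Prop
  | inv_aa' : rel (gen a * gen a') 1
  | inv_a'a : rel (gen a' * gen a) 1
  | inv_bb' : rel (gen b * gen b') 1
  | inv_b'b : rel (gen b' * gen b) 1
  | comm (x : L) (hx : x ≠ h) : rel (gen x * gen h) (gen h * gen x)
  | swap (x y : L) (hx : x ≠ h) (hy : y ≠ h) :
      rel (gen h * gen x * gen y) (gen h * gen y * gen x)
  | zero (x : L) (hx : x ≠ h) : rel (gen h * gen h * gen x) (gen h * gen h)
  | zero_h : rel (gen h * gen h * gen h) (gen h * gen h)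

/-- The congruence on the free monoid generated by the defining relations. -/
def Mcon : Con W := conGen rel

/-- The monoid `M` defined by the presentation. -/
abbrev M : Type := Mcon.Quotient

/-- The canonical projection from words to elements of `M`. -/
def π : W →* M := Mcon.mk'

/-!
Sending `a, b` to the free generators and `h` to `0` respects every relation, since each relation
is either an inverse law or has `h` on both sides. This gives `M →* WithZero (FreeGroup Bool)`.
A unit of `M` maps to a nonzero element, so every word representing a unit is free of `h`, and
the units are generated by `a` and `b`. Composing with `(WithZero G)ˣ ≃* G` retracts `Mˣ` onto
the free group, so `a` and `b` generate it freely.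
-/

open L

def letterImage : L → WithZero (FreeGroup Bool)
  | a => FreeGroup.of true
  | a' => (FreeGroup.of true)⁻¹
  | b => FreeGroup.of false
  | b' => (FreeGroup.of false)⁻¹
  | h => 0

def wordImage : W →* WithZero (FreeGroup Bool) := FreeMonoid.lift letterImage

lemma wordImage_gen (x : L) : wordImage (gen x) = letterImage x := rfl

lemma wordImage_eq_of_rel {w w' : W} (r : rel w w') : wordImage w = wordImage w' := by
  cases r <;> simp [wordImage_gen, letterImage]

lemma Mcon_le_ker_wordImage : Mcon ≤ Con.ker wordImage :=
  Con.conGen_le.mpr fun _ _ r => (Con.ker_rel wordImage).mpr (wordImage_eq_of_rel r)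

def toWithZero : M →* WithZero (FreeGroup Bool) := Mcon.lift wordImage Mcon_le_ker_wordImage

lemma toWithZero_π (w : W) : toWithZero (π w) = wordImage w :=
  Con.lift_mk' Mcon_le_ker_wordImage w

def unitsToFreeGroup : Mˣ →* FreeGroup Bool :=
  WithZero.unitsWithZeroEquiv.toMonoidHom.comp (Units.map toWithZero)

lemma coe_unitsToFreeGroup (u : Mˣ) :
    (unitsToFreeGroup u : WithZero (FreeGroup Bool)) = toWithZero u :=
  WithZero.coe_unitsWithZeroEquiv_eq_units_val _

lemma π_mul_eq_one {x y : L} (r : rel (gen x * gen y) 1) : π (gen x) * π (gen y) = 1 := by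
  rw [← map_mul, ← map_one π]
  exact Mcon.eq.mpr (ConGen.Rel.of _ _ r)

def unitOfRel {x y : L} (hxy : rel (gen x * gen y) 1) (hyx : rel (gen y * gen x) 1) : Mˣ :=
  ⟨π (gen x), π (gen y), π_mul_eq_one hxy, π_mul_eq_one hyx⟩

def unitA : Mˣ := unitOfRel rel.inv_aa' rel.inv_a'a

def unitB : Mˣ := unitOfRel rel.inv_bb' rel.inv_b'b

def ofFreeGroup : FreeGroup Bool →* Mˣ := FreeGroup.lift fun t => cond t unitA unitB

lemma unitsToFreeGroup_comp_ofFreeGroup : unitsToFreeGroup.comp ofFreeGroup = MonoidHom.id _ := by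
  refine FreeGroup.ext_hom _ _ fun t => WithZero.coe_injective ?_
  cases t <;> simp [ofFreeGroup, coe_unitsToFreeGroup, unitA, unitB, unitOfRel, toWithZero_π,
    wordImage_gen, letterImage]

lemma ofFreeGroup_injective : Function.Injective ofFreeGroup :=
  Function.LeftInverse.injective (g := unitsToFreeGroup)
    (DFunLike.congr_fun unitsToFreeGroup_comp_ofFreeGroup)

lemma exists_ofFreeGroup_eq_of_ne_h {x : L} (hx : x ≠ h) :
    ∃ g, (ofFreeGroup g : M) = π (gen x) := by
  cases x
  · exact ⟨FreeGroup.of true, by simp [ofFreeGroup, unitA, unitOfRel]⟩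
  · exact ⟨(FreeGroup.of true)⁻¹, by simp [ofFreeGroup, unitA, unitOfRel]⟩
  · exact ⟨FreeGroup.of false, by simp [ofFreeGroup, unitB, unitOfRel]⟩
  · exact ⟨(FreeGroup.of false)⁻¹, by simp [ofFreeGroup, unitB, unitOfRel]⟩
  · exact absurd rfl hx

lemma exists_ofFreeGroup_eq_of_wordImage_ne_zero (w : W) (hw : wordImage w ≠ 0) :
    ∃ g, (ofFreeGroup g : M) = π w := by
  induction w using FreeMonoid.inductionOn' with
  | one => exact ⟨1, by simp⟩
  | of_mul x w ih =>
    rw [map_mul, mul_ne_zero_iff] at hw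
    have hx : x ≠ h := by rintro rfl; exact hw.1 rfl
    obtain ⟨g, hg⟩ := exists_ofFreeGroup_eq_of_ne_h hx
    obtain ⟨g', hg'⟩ := ih hw.2
    exact ⟨g * g', by rw [map_mul, Units.val_mul, hg, hg', ← map_mul]; rfl⟩

lemma ofFreeGroup_surjective : Function.Surjective ofFreeGroup := by
  intro u
  obtain ⟨w, hw⟩ := Con.mk'_surjective (u : M)
  have hw_ne : wordImage w ≠ 0 := by
    rw [← toWithZero_π, π, hw]
    exact (u.map toWithZero).ne_zero
  obtain ⟨g, hg⟩ := exists_ofFreeGroup_eq_of_wordImage_ne_zero w hw_ne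
  exact ⟨g, Units.ext (hg.trans hw)⟩

/-- The group of units of `M` is isomorphic to the free group
of rank 2. -/
theorem stmt_16 : Nonempty (Mˣ ≃* FreeGroup Bool) :=
  ⟨(MulEquiv.ofBijective ofFreeGroup ⟨ofFreeGroup_injective, ofFreeGroup_surjective⟩).symm⟩
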